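/- Let P be a Poisson n-Lie algebra over a field F, a ∈ P, λ ∈ F, and y = (y₁,…,y_{n−1}) a tuple in P. Set Q_y(x) = [y₁,…,y_{n−1},x] and P_b(x) = b·x. Then for all k ≥ 1 and all x ∈ P: (P_a − λ)^k Q_y(x) = Q_y((P_a − λ)^k(x)) − k · P_{Q_y(a)}((P_a − λ)^{k−1}(x)). -/
import Mathlib


/-- The commutation identity
`(P_a − λ)^k Q_y(x) = Q_y((P_a − λ)^k x) − k · P_{Q_y(a)}((P_a − λ)^{k-1} x)`
in a Poisson `n`-Lie algebra, for all `k ≥ 1` (written `k = j + 1`). -/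
theorem poisson_commutation_identity
    (F P : Type*) [Field F] [CommRing P] [Algebra F P] (m : ℕ)
    (br : AlternatingMap F P P (Fin (m + 2)))
    (hFI : ∀ (x : Fin (m + 1) → P) (y : Fin (m + 2) → P),
      br (Fin.snoc x (br y)) =
        ∑ i, br (Function.update y i (br (Fin.snoc x (y i)))))
    (hLeib : ∀ (u v : P) (x : Fin (m + 1) → P),
      br (Fin.cons (u * v) x) = u * br (Fin.cons v x) + v * br (Fin.cons u x))
    (a : P) (lam : F) (y : Fin (m + 1) → P) (j : ℕ) (x : P) :
    (fun w => a * w - lam • w)^[j + 1] (br (Fin.snoc y x)) =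
      br (Fin.snoc y ((fun w => a * w - lam • w)^[j + 1] x)) -
        (j + 1) • (br (Fin.snoc y a) * (fun w => a * w - lam • w)^[j] x) := by
  set T : P → P := fun w => a * w - lam • w with hT
  -- Leibniz rule in the last slot
  have hsc : ∀ z : P, br (Fin.snoc y z) =
      (Equiv.Perm.sign (finRotate (m + 2))) • br (Fin.cons z y) := by
    intro z
    have h := Fin.snoc_eq_cons_rotate y z
    have : (Fin.snoc y z : Fin (m+2) → P) = (Fin.cons z y) ∘ (finRotate (m+2)) := by
      ext i; exact congrFun h i
    rw [this, AlternatingMap.map_perm]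
  have hderiv : ∀ u v : P, br (Fin.snoc y (u * v)) =
      u * br (Fin.snoc y v) + v * br (Fin.snoc y u) := by
    intro u v
    rw [hsc, hsc, hsc, hLeib]
    simp only [Units.smul_def, smul_add, Int.smul_one_eq_cast, zsmul_eq_mul]
    push_cast
    ring
  -- linearity of Q in the last slot
  have hsub : ∀ z w : P, br (Fin.snoc y (z - w)) = br (Fin.snoc y z) - br (Fin.snoc y w) := by
    intro z w
    have := br.toMultilinearMap.snoc_add y (z - w) w
    simp only [sub_add_cancel] at this
    rw [AlternatingMap.coe_multilinearMap] at this
    linear_combination -this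
  have hsmul : ∀ (c : F) (z : P), br (Fin.snoc y (c • z)) = c • br (Fin.snoc y z) := by
    intro c z
    exact br.toMultilinearMap.snoc_smul y c z
  -- base case: T (Q x) = Q (T x) - Q a * x
  have base : ∀ z : P, T (br (Fin.snoc y z)) =
      br (Fin.snoc y (T z)) - br (Fin.snoc y a) * z := by
    intro z
    have h1 := hderiv a z
    simp only [hT]
    rw [hsub, hsmul]
    ring_nf
    linear_combination -h1
  induction j with
  | zero =>
    simpa using base x
  | succ n ih =>
    have h1 : T^[n + 1 + 1] (br (Fin.snoc y x)) = T (T^[n + 1] (br (Fin.snoc y x))) :=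
      Function.iterate_succ_apply' T (n + 1) _
    rw [h1, ih]
    have hTsub : ∀ u v : P, T (u - v) = T u - T v := by
      intro u v; simp only [hT]; rw [smul_sub]; ring
    have hTsmul : ∀ (k : ℕ) (u : P), T (k • u) = k • T u := by
      intro k u; simp only [hT]; rw [smul_sub, mul_smul_comm, smul_comm lam k]
    rw [hTsub, base, hTsmul]
    have hmul : T (br (Fin.snoc y a) * T^[n] x) = br (Fin.snoc y a) * T (T^[n] x) := by
      simp only [hT]; rw [mul_sub, mul_smul_comm]; ring
    rw [hmul, ← Function.iterate_succ_apply' T n x, ← Function.iterate_succ_apply' T (n+1) x]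
    have : ((n : ℕ) + 1 + 1) • (br (Fin.snoc y a) * T^[n + 1] x) =
        br (Fin.snoc y a) * T^[n + 1] x + (n + 1) • (br (Fin.snoc y a) * T^[n + 1] x) := by
      rw [add_smul, one_smul, add_comm]
    rw [this]
    abel
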